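/- arXiv:2305.07754 — 6 statements merged into one kernel-verified Lean document; each statement's English description precedes it below -/
import Mathlib

section
/- Fix an integer k ≥ 0, a real number r > 0, and disjoint finite subsets Q, P of the open upper half-plane ℍ with |Q| = |P| = k. Then there is exactly one rational function F on the Riemann sphere ℂ∪{∞} such that: F(0) = r; every zero and every pole of F is simple; F has no zeros or poles on ℝ∪{∞}; F(x) ∈ ℝ_{>0} for every x ∈ ℝ; the set of zeros of F lying in ℍ is exactly Q; and the set of poles of F lying in ℍ is exactly P. Explicitly, F(ζ) = κ·∏_{q∈Q}(ζ−q)(ζ−q̄) / ∏_{p∈P}(ζ−p)(ζ−p̄), where κ = r·∏_{p∈P}|p|² / ∏_{q∈Q}|q|² and z̄ denotes the complex conjugate. -/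
open Polynomial

/-- The explicit rational function
`F(ζ) = κ·∏_{q∈Q}(ζ−q)(ζ−q̄) / ∏_{p∈P}(ζ−p)(ζ−p̄)` with
`κ = r·∏_{p∈P}|p|² / ∏_{q∈Q}|q|²`. -/
noncomputable def explicitF (r : ℝ) (Q P : Finset ℂ) : RatFunc ℂ :=
  algebraMap (Polynomial ℂ) (RatFunc ℂ)
      (C ((r : ℂ) * ∏ p ∈ P, (Complex.normSq p : ℂ)) *
        ∏ q ∈ Q, ((X - C q) * (X - C ((starRingEnd ℂ) q)))) /
    algebraMap (Polynomial ℂ) (RatFunc ℂ)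
      (C (∏ q ∈ Q, (Complex.normSq q : ℂ)) *
        ∏ p ∈ P, ((X - C p) * (X - C ((starRingEnd ℂ) p))))

/- ### Auxiliary lemmas -/

lemma aux_num_denom_of_coprime {p q : ℂ[X]} (hq : q.Monic) (h : IsCoprime p q) :
    (algebraMap (Polynomial ℂ) (RatFunc ℂ) p / algebraMap (Polynomial ℂ) (RatFunc ℂ) q).num = p ∧
    (algebraMap (Polynomial ℂ) (RatFunc ℂ) p / algebraMap (Polynomial ℂ) (RatFunc ℂ) q).denom
      = q := by
  set F := algebraMap (Polynomial ℂ) (RatFunc ℂ) p / algebraMap (Polynomial ℂ) (RatFunc ℂ) q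
    with hF
  have hq0 : q ≠ 0 := hq.ne_zero
  have key : F.num * q = p * F.denom := (RatFunc.num_mul_eq_mul_denom_iff hq0).mpr rfl
  have hcop := RatFunc.isCoprime_num_denom F
  have hd1 : F.denom ∣ q := by
    have : F.denom ∣ F.num * q := ⟨p, by linear_combination key⟩
    exact hcop.symm.dvd_of_dvd_mul_left this
  have hd2 : q ∣ F.denom := by
    have : q ∣ p * F.denom := ⟨F.num, by linear_combination -key⟩
    exact h.symm.dvd_of_dvd_mul_left this
  have hdeq : F.denom = q :=
    Polynomial.eq_of_monic_of_associated (RatFunc.monic_denom F) hq (associated_of_dvd_dvd hd1 hd2)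
  refine ⟨?_, hdeq⟩
  rw [hdeq] at key
  exact mul_right_cancel₀ hq0 key

lemma aux_coprime_prods {S T : Finset ℂ} (h : Disjoint S T) :
    IsCoprime (∏ z ∈ S, (X - C z)) (∏ z ∈ T, (X - C z : ℂ[X])) := by
  apply IsCoprime.prod_left
  intro a ha
  apply IsCoprime.prod_right
  intro b hb
  have hab : a ≠ b := fun hEq => (Finset.disjoint_left.mp h ha) (hEq ▸ hb)
  exact Polynomial.isCoprime_X_sub_C_of_isUnit_sub
    (IsUnit.of_mul_eq_one (a - b)⁻¹ (mul_inv_cancel₀ (sub_ne_zero.mpr hab)))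

lemma aux_pair_prod_eq (S : Finset ℂ) (hS : ∀ z ∈ S, 0 < z.im) :
    ∏ q ∈ S, ((X - C q) * (X - C ((starRingEnd ℂ) q))) =
      ∏ z ∈ S ∪ S.image (starRingEnd ℂ), (X - C z : ℂ[X]) := by
  have hdisj : Disjoint S (S.image (starRingEnd ℂ)) := by
    rw [Finset.disjoint_left]
    intro z hz hz'
    obtain ⟨w, hw, rfl⟩ := Finset.mem_image.mp hz'
    have h1 := hS _ hz
    have h2 := hS _ hw
    simp only [Complex.conj_im] at h1
    linarith
  rw [Finset.prod_union hdisj,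
    Finset.prod_image (g := ⇑(starRingEnd ℂ)) (f := fun z => (X - C z : ℂ[X]))
      (fun a _ b _ h => star_injective h),
    ← Finset.prod_mul_distrib]

lemma aux_disjoint_doubled {Q P : Finset ℂ} (hQ : ∀ z ∈ Q, 0 < z.im)
    (hP : ∀ z ∈ P, 0 < z.im) (hQP : Disjoint Q P) :
    Disjoint (Q ∪ Q.image (starRingEnd ℂ)) (P ∪ P.image (starRingEnd ℂ)) := by
  rw [Finset.disjoint_left]
  intro z hz hz'
  rw [Finset.mem_union, Finset.mem_image] at hz hz'
  rcases hz with hz | ⟨q, hq, rfl⟩ <;> rcases hz' with hz' | ⟨p, hp, hpz⟩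
  · exact Finset.disjoint_left.mp hQP hz hz'
  · have h1 := hQ _ hz; have h2 := hP _ hp
    have : ((starRingEnd ℂ) p).im = z.im := by rw [hpz]
    simp only [Complex.conj_im] at this; linarith
  · have h1 := hQ _ hq; have h2 := hP _ hz'
    simp only [Complex.conj_im] at h2; linarith
  · have : q = p := star_injective hpz.symm
    exact Finset.disjoint_left.mp hQP hq (this ▸ hp)

lemma aux_prod_normSq_pos {S : Finset ℂ} (hS : ∀ z ∈ S, 0 < z.im) :
    0 < ∏ z ∈ S, Complex.normSq z := by
  apply Finset.prod_pos
  intro z hz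
  apply Complex.normSq_pos.mpr
  intro h
  have := hS z hz
  rw [h] at this; simp at this

lemma aux_explicit_repr (r : ℝ) (Q P : Finset ℂ)
    (hQ : ∀ z ∈ Q, 0 < z.im) (hP : ∀ z ∈ P, 0 < z.im) :
    explicitF r Q P =
      algebraMap (Polynomial ℂ) (RatFunc ℂ)
        (C ((r * (∏ p ∈ P, Complex.normSq p) / ∏ q ∈ Q, Complex.normSq q : ℝ) : ℂ) *
          ∏ z ∈ Q ∪ Q.image (starRingEnd ℂ), (X - C z)) /
      algebraMap (Polynomial ℂ) (RatFunc ℂ)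
        (∏ z ∈ P ∪ P.image (starRingEnd ℂ), (X - C z)) := by
  have hnq : (0:ℝ) < ∏ q ∈ Q, Complex.normSq q := aux_prod_normSq_pos hQ
  have hmB : (∏ z ∈ P ∪ P.image (starRingEnd ℂ), (X - C z : ℂ[X])).Monic :=
    monic_prod_of_monic _ _ fun z _ => monic_X_sub_C z
  have hc₂ : (∏ q ∈ Q, (Complex.normSq q : ℂ)) ≠ 0 := by
    rw [← Complex.ofReal_prod]
    exact_mod_cast hnq.ne'
  rw [explicitF, aux_pair_prod_eq Q hQ, aux_pair_prod_eq P hP]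
  rw [div_eq_div_iff (RatFunc.algebraMap_ne_zero (mul_ne_zero (C_ne_zero.mpr hc₂) hmB.ne_zero))
    (RatFunc.algebraMap_ne_zero hmB.ne_zero), ← map_mul, ← map_mul]
  apply congrArg
  have hc : ((r : ℂ) * ∏ p ∈ P, (Complex.normSq p : ℂ)) =
      ((r * (∏ p ∈ P, Complex.normSq p) / ∏ q ∈ Q, Complex.normSq q : ℝ) : ℂ) *
        ∏ q ∈ Q, (Complex.normSq q : ℂ) := by
    rw [← Complex.ofReal_prod, ← Complex.ofReal_prod, ← Complex.ofReal_mul, ← Complex.ofReal_mul]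
    congr 1
    field_simp
  rw [hc, C_mul]
  ring

lemma aux_explicit_num_denom (r : ℝ) (hr : 0 < r) (Q P : Finset ℂ)
    (hQ : ∀ z ∈ Q, 0 < z.im) (hP : ∀ z ∈ P, 0 < z.im) (hQP : Disjoint Q P) :
    (explicitF r Q P).num =
      C ((r * (∏ p ∈ P, Complex.normSq p) / ∏ q ∈ Q, Complex.normSq q : ℝ) : ℂ) *
        ∏ z ∈ Q ∪ Q.image (starRingEnd ℂ), (X - C z) ∧
    (explicitF r Q P).denom = ∏ z ∈ P ∪ P.image (starRingEnd ℂ), (X - C z) := by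
  have hκ : ((r * (∏ p ∈ P, Complex.normSq p) / ∏ q ∈ Q, Complex.normSq q : ℝ) : ℂ) ≠ 0 := by
    have h1 := aux_prod_normSq_pos hQ
    have h2 := aux_prod_normSq_pos hP
    have : (0:ℝ) < r * (∏ p ∈ P, Complex.normSq p) / ∏ q ∈ Q, Complex.normSq q :=
      div_pos (mul_pos hr h2) h1
    exact_mod_cast this.ne'
  have hmB : (∏ z ∈ P ∪ P.image (starRingEnd ℂ), (X - C z : ℂ[X])).Monic :=
    monic_prod_of_monic _ _ fun z _ => monic_X_sub_C z
  have hcop : IsCoprime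
      (C ((r * (∏ p ∈ P, Complex.normSq p) / ∏ q ∈ Q, Complex.normSq q : ℝ) : ℂ) *
        ∏ z ∈ Q ∪ Q.image (starRingEnd ℂ), (X - C z))
      (∏ z ∈ P ∪ P.image (starRingEnd ℂ), (X - C z : ℂ[X])) := by
    apply (isCoprime_mul_unit_left_left (Polynomial.isUnit_C.mpr (isUnit_iff_ne_zero.mpr hκ)) _ _).mpr
    exact aux_coprime_prods (aux_disjoint_doubled hQ hP hQP)
  rw [aux_explicit_repr r Q P hQ hP]
  exact aux_num_denom_of_coprime hmB hcop

lemma aux_eval_conj (p : ℂ[X]) (z : ℂ) :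
    (p.map (starRingEnd ℂ)).eval ((starRingEnd ℂ) z) = (starRingEnd ℂ) (p.eval z) := by
  rw [eval_map, eval₂_hom]

lemma aux_eval_pair_prod (S : Finset ℂ) (x : ℝ) :
    (∏ q ∈ S, ((X - C q) * (X - C ((starRingEnd ℂ) q)))).eval (x : ℂ) =
      ((∏ q ∈ S, Complex.normSq ((x : ℂ) - q) : ℝ) : ℂ) := by
  rw [eval_prod, Complex.ofReal_prod]
  apply Finset.prod_congr rfl
  intro q _
  rw [eval_mul, eval_sub, eval_sub, eval_X, eval_C, eval_C]
  rw [← Complex.mul_conj]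
  congr 1
  rw [map_sub, Complex.conj_ofReal]

lemma aux_prod_roots_eval_eq_zero {T : Finset ℂ} {w : ℂ} :
    (∏ z ∈ T, (X - C z : ℂ[X])).eval w = 0 ↔ w ∈ T := by
  rw [eval_prod, Finset.prod_eq_zero_iff]
  constructor
  · rintro ⟨z, hz, h⟩
    rw [eval_sub, eval_X, eval_C, sub_eq_zero] at h
    exact h ▸ hz
  · intro hw
    exact ⟨w, hw, by simp⟩

/-- fix `k ≥ 0`, `r > 0`, and disjoint finite subsets `Q, P` of the open
upper half-plane with `|Q| = |P| = k`.  Then there is exactly one rational function `F`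
on the Riemann sphere with `F(0) = r`, all zeros and poles simple, no zeros or poles on
`ℝ ∪ {∞}` (no pole/zero at `∞` meaning `deg num = deg denom`), `F(ℝ) ⊆ ℝ_{>0}`, whose
zeros in the upper half-plane are exactly `Q` and whose poles there are exactly `P`;
explicitly, `F = explicitF r Q P`. -/
theorem statement2 (k : ℕ) (r : ℝ) (hr : 0 < r) (Q P : Finset ℂ)
    (hQcard : Q.card = k) (hPcard : P.card = k)
    (hQ : ∀ z ∈ Q, 0 < z.im) (hP : ∀ z ∈ P, 0 < z.im) (hQP : Disjoint Q P) :
    ∀ F : RatFunc ℂ,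
      (RatFunc.eval (RingHom.id ℂ) 0 F = (r : ℂ) ∧
        (∀ z : ℂ, F.num.rootMultiplicity z ≤ 1) ∧
        (∀ z : ℂ, F.denom.rootMultiplicity z ≤ 1) ∧
        (∀ x : ℝ, F.num.eval (x : ℂ) ≠ 0 ∧ F.denom.eval (x : ℂ) ≠ 0) ∧
        F.num.degree = F.denom.degree ∧
        (∀ x : ℝ, ∃ y : ℝ, 0 < y ∧ RatFunc.eval (RingHom.id ℂ) (x : ℂ) F = (y : ℂ)) ∧
        {z : ℂ | 0 < z.im ∧ F.num.eval z = 0} = (Q : Set ℂ) ∧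
        {z : ℂ | 0 < z.im ∧ F.denom.eval z = 0} = (P : Set ℂ)) ↔
      F = explicitF r Q P := by
  intro F
  -- notation
  set κ : ℝ := r * (∏ p ∈ P, Complex.normSq p) / ∏ q ∈ Q, Complex.normSq q with hκdef
  have hnq : (0:ℝ) < ∏ q ∈ Q, Complex.normSq q := aux_prod_normSq_pos hQ
  have hnp : (0:ℝ) < ∏ p ∈ P, Complex.normSq p := aux_prod_normSq_pos hP
  have hκpos : 0 < κ := div_pos (mul_pos hr hnp) hnq
  have hκc : (κ : ℂ) ≠ 0 := by exact_mod_cast hκpos.ne'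
  obtain ⟨hnum, hden⟩ := aux_explicit_num_denom r hr Q P hQ hP hQP
  have hQim : ∀ z ∈ Q ∪ Q.image (starRingEnd ℂ), z.im ≠ 0 := by
    intro z hz
    rw [Finset.mem_union, Finset.mem_image] at hz
    rcases hz with hz | ⟨q, hq, rfl⟩
    · exact (hQ _ hz).ne'
    · have := hQ _ hq
      simp only [Complex.conj_im]
      linarith
  have hPim : ∀ z ∈ P ∪ P.image (starRingEnd ℂ), z.im ≠ 0 := by
    intro z hz
    rw [Finset.mem_union, Finset.mem_image] at hz
    rcases hz with hz | ⟨p, hp, rfl⟩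
    · exact (hP _ hz).ne'
    · have := hP _ hp
      simp only [Complex.conj_im]
      linarith
  constructor
  · -- Uniqueness (forward) direction
    rintro ⟨h0, hm1, hm2, hreal, hdeg, hpos, hzQ, hzP⟩
    have hden0 : F.denom ≠ 0 := RatFunc.denom_ne_zero F
    have hnum0 : F.num ≠ 0 := by
      intro h
      exact (hreal 0).1 (by rw [h, eval_zero])
    -- conjugation symmetry
    have key : F.num * (F.denom.map (starRingEnd ℂ)) =
        (F.num.map (starRingEnd ℂ)) * F.denom := by
      have hzero : F.num * (F.denom.map (starRingEnd ℂ)) -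
          (F.num.map (starRingEnd ℂ)) * F.denom = 0 := by
        apply Polynomial.eq_zero_of_infinite_isRoot
        refine Set.Infinite.mono ?_
          (Set.infinite_range_of_injective Complex.ofReal_injective)
        rintro _ ⟨x, rfl⟩
        obtain ⟨y, hy, hyF⟩ := hpos x
        have hd : F.denom.eval (x : ℂ) ≠ 0 := (hreal x).2
        have hyF' : F.num.eval (x : ℂ) = (y : ℂ) * F.denom.eval (x : ℂ) := by
          have h' : F.num.eval (x : ℂ) / F.denom.eval (x : ℂ) = (y : ℂ) := hyF
          rwa [div_eq_iff hd] at h'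
        have hcd : (F.denom.map (starRingEnd ℂ)).eval (x : ℂ) =
            (starRingEnd ℂ) (F.denom.eval (x : ℂ)) := by
          have := aux_eval_conj F.denom (x : ℂ)
          rwa [Complex.conj_ofReal] at this
        have hcn : (F.num.map (starRingEnd ℂ)).eval (x : ℂ) =
            (starRingEnd ℂ) (F.num.eval (x : ℂ)) := by
          have := aux_eval_conj F.num (x : ℂ)
          rwa [Complex.conj_ofReal] at this
        show IsRoot _ _
        rw [IsRoot, eval_sub, eval_mul, eval_mul, hcd, hcn, hyF', map_mul,
          Complex.conj_ofReal]
        ring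
      exact sub_eq_zero.mp hzero
    have hcd_eq : F.denom.map (starRingEnd ℂ) = F.denom := by
      have hmcd : (F.denom.map (starRingEnd ℂ)).Monic := (RatFunc.monic_denom F).map _
      have hcopc : IsCoprime (F.num.map (starRingEnd ℂ)) (F.denom.map (starRingEnd ℂ)) :=
        (RatFunc.isCoprime_num_denom F).map (mapRingHom (starRingEnd ℂ))
      have hd1 : F.denom ∣ F.denom.map (starRingEnd ℂ) := by
        have : F.denom ∣ F.num * (F.denom.map (starRingEnd ℂ)) :=
          ⟨F.num.map (starRingEnd ℂ), by linear_combination key⟩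
        exact (RatFunc.isCoprime_num_denom F).symm.dvd_of_dvd_mul_left this
      have hd2 : F.denom.map (starRingEnd ℂ) ∣ F.denom := by
        have : F.denom.map (starRingEnd ℂ) ∣ (F.num.map (starRingEnd ℂ)) * F.denom :=
          ⟨F.num, by linear_combination -key⟩
        exact hcopc.symm.dvd_of_dvd_mul_left this
      exact Polynomial.eq_of_monic_of_associated hmcd (RatFunc.monic_denom F)
        (associated_of_dvd_dvd hd2 hd1)
    have hcn_eq : F.num.map (starRingEnd ℂ) = F.num := by
      rw [hcd_eq] at key
      exact (mul_right_cancel₀ hden0 key).symm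
    have hsym_num : ∀ z : ℂ, F.num.eval ((starRingEnd ℂ) z) = (starRingEnd ℂ) (F.num.eval z) := by
      intro z
      conv_lhs => rw [← hcn_eq]
      exact aux_eval_conj F.num z
    have hsym_den : ∀ z : ℂ, F.denom.eval ((starRingEnd ℂ) z) =
        (starRingEnd ℂ) (F.denom.eval z) := by
      intro z
      conv_lhs => rw [← hcd_eq]
      exact aux_eval_conj F.denom z
    -- root structure
    have hroots : ∀ (p : ℂ[X]) (S : Finset ℂ), p ≠ 0 →
        (∀ z : ℂ, p.eval ((starRingEnd ℂ) z) = (starRingEnd ℂ) (p.eval z)) →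
        (∀ x : ℝ, p.eval (x : ℂ) ≠ 0) →
        ({z : ℂ | 0 < z.im ∧ p.eval z = 0} = (S : Set ℂ)) →
        p.roots.toFinset = S ∪ S.image (starRingEnd ℂ) := by
      intro p S hp0 hsym hrl hzS
      ext z
      rw [Multiset.mem_toFinset, mem_roots hp0, Finset.mem_union, Finset.mem_image]
      constructor
      · intro hz
        rcases lt_trichotomy z.im 0 with him | him | him
        · right
          have hmem : (starRingEnd ℂ) z ∈ {w : ℂ | 0 < w.im ∧ p.eval w = 0} := by
            refine ⟨?_, ?_⟩
            · simp only [Complex.conj_im]; linarith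
            · rw [hsym z, hz, map_zero]
          rw [hzS] at hmem
          exact ⟨(starRingEnd ℂ) z, hmem, Complex.conj_conj z⟩
        · exfalso
          have hz' : (z.re : ℂ) = z := Complex.ext (by simp) (by simp [him])
          exact hrl z.re (by rw [hz']; exact hz)
        · left
          have hmem : z ∈ {w : ℂ | 0 < w.im ∧ p.eval w = 0} := ⟨him, hz⟩
          rw [hzS] at hmem
          exact hmem
      · rintro (hz | ⟨q, hq, rfl⟩)
        · have hmem : z ∈ (S : Set ℂ) := hz
          rw [← hzS] at hmem
          exact hmem.2
        · have hmem : q ∈ (S : Set ℂ) := hq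
          rw [← hzS] at hmem
          show IsRoot _ _
          rw [IsRoot, hsym q, hmem.2, map_zero]
    have hroots_num := hroots F.num Q hnum0 hsym_num (fun x => (hreal x).1) hzQ
    have hroots_den := hroots F.denom P hden0 hsym_den (fun x => (hreal x).2) hzP
    have hrootsval_num : F.num.roots = (Q ∪ Q.image (starRingEnd ℂ)).val := by
      have hnd : F.num.roots.Nodup := Multiset.nodup_iff_count_le_one.mpr fun z => by
        rw [count_roots]; exact hm1 z
      rw [← hroots_num, Multiset.toFinset_val, Multiset.dedup_eq_self.mpr hnd]
    have hrootsval_den : F.denom.roots = (P ∪ P.image (starRingEnd ℂ)).val := by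
      have hnd : F.denom.roots.Nodup := Multiset.nodup_iff_count_le_one.mpr fun z => by
        rw [count_roots]; exact hm2 z
      rw [← hroots_den, Multiset.toFinset_val, Multiset.dedup_eq_self.mpr hnd]
    have hnum_eq : F.num = C F.num.leadingCoeff *
        ∏ z ∈ Q ∪ Q.image (starRingEnd ℂ), (X - C z) := by
      have h := Splits.eq_prod_roots (IsAlgClosed.splits F.num)
      rw [hrootsval_num] at h
      rw [Finset.prod_eq_multiset_prod]
      exact h
    have hden_eq : F.denom = ∏ z ∈ P ∪ P.image (starRingEnd ℂ), (X - C z) := by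
      have h := Splits.eq_prod_roots (IsAlgClosed.splits F.denom)
      rw [hrootsval_den, (RatFunc.monic_denom F).leadingCoeff, map_one, one_mul] at h
      rw [h, Finset.prod_eq_multiset_prod]
    -- identify the leading coefficient
    have hden00 : F.denom.eval 0 ≠ 0 := by
      have := (hreal 0).2
      rwa [Complex.ofReal_zero] at this
    have h0' : F.num.eval 0 / F.denom.eval 0 = (r : ℂ) := h0
    rw [div_eq_iff hden00] at h0'
    have hnum_eval0 : F.num.eval 0 =
        F.num.leadingCoeff * ((∏ q ∈ Q, Complex.normSq q : ℝ) : ℂ) := by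
      have e0 : ((0:ℂ)) = ((0:ℝ) : ℂ) := by norm_num
      conv_lhs => rw [hnum_eq, eval_mul, eval_C, e0, ← aux_pair_prod_eq Q hQ,
        aux_eval_pair_prod]
      congr 2
      apply Finset.prod_congr rfl
      intro q _
      rw [Complex.ofReal_zero, zero_sub, Complex.normSq_neg]
    have hden_eval0 : F.denom.eval 0 = ((∏ p ∈ P, Complex.normSq p : ℝ) : ℂ) := by
      have e0 : ((0:ℂ)) = ((0:ℝ) : ℂ) := by norm_num
      rw [hden_eq, e0, ← aux_pair_prod_eq P hP, aux_eval_pair_prod]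
      congr 1
      apply Finset.prod_congr rfl
      intro p _
      rw [Complex.ofReal_zero, zero_sub, Complex.normSq_neg]
    have hlead : F.num.leadingCoeff = (κ : ℂ) := by
      rw [hnum_eval0, hden_eval0] at h0'
      have hnqc : ((∏ q ∈ Q, Complex.normSq q : ℝ) : ℂ) ≠ 0 := by exact_mod_cast hnq.ne'
      rw [hκdef, Complex.ofReal_div, Complex.ofReal_mul, eq_div_iff hnqc]
      exact h0'
    rw [← RatFunc.num_div_denom F, hnum_eq, hlead, hden_eq, aux_explicit_repr r Q P hQ hP]
  · -- Verification (backward) direction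
    rintro rfl
    -- evaluation facts
    have hqx : ∀ (x : ℝ), 0 < ∏ q ∈ Q, Complex.normSq ((x : ℂ) - q) := by
      intro x
      apply Finset.prod_pos
      intro q hq
      apply Complex.normSq_pos.mpr
      intro h
      have : ((x : ℂ) - q).im = 0 := by rw [h]; rfl
      simp only [Complex.sub_im, Complex.ofReal_im, zero_sub, neg_eq_zero] at this
      exact (hQ _ hq).ne' this
    have hpx : ∀ (x : ℝ), 0 < ∏ p ∈ P, Complex.normSq ((x : ℂ) - p) := by
      intro x
      apply Finset.prod_pos
      intro p hp
      apply Complex.normSq_pos.mpr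
      intro h
      have : ((x : ℂ) - p).im = 0 := by rw [h]; rfl
      simp only [Complex.sub_im, Complex.ofReal_im, zero_sub, neg_eq_zero] at this
      exact (hP _ hp).ne' this
    have hevalnum : ∀ x : ℝ, (explicitF r Q P).num.eval (x : ℂ) =
        ((κ * ∏ q ∈ Q, Complex.normSq ((x : ℂ) - q) : ℝ) : ℂ) := by
      intro x
      rw [hnum, eval_mul, eval_C, ← aux_pair_prod_eq Q hQ, aux_eval_pair_prod,
        Complex.ofReal_mul]
    have hevalden : ∀ x : ℝ, (explicitF r Q P).denom.eval (x : ℂ) =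
        ((∏ p ∈ P, Complex.normSq ((x : ℂ) - p) : ℝ) : ℂ) := by
      intro x
      rw [hden, ← aux_pair_prod_eq P hP, aux_eval_pair_prod]
    refine ⟨?_, ?_, ?_, ?_, ?_, ?_, ?_, ?_⟩
    · -- eval at 0 is r
      show (explicitF r Q P).num.eval₂ (RingHom.id ℂ) 0 /
          (explicitF r Q P).denom.eval₂ (RingHom.id ℂ) 0 = (r : ℂ)
      have e0 : ((0:ℂ)) = ((0:ℝ) : ℂ) := by norm_num
      show (explicitF r Q P).num.eval 0 / (explicitF r Q P).denom.eval 0 = (r : ℂ)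
      rw [e0, hevalnum 0, hevalden 0]
      rw [← Complex.ofReal_div]
      norm_cast
      simp only [Complex.ofReal_zero, zero_sub, Complex.normSq_neg]
      rw [hκdef]
      field_simp
    · -- simple zeros
      intro z
      rw [← count_roots, hnum, roots_C_mul _ hκc, roots_prod_X_sub_C]
      exact Multiset.nodup_iff_count_le_one.mp (Q ∪ Q.image (starRingEnd ℂ)).nodup z
    · -- simple poles
      intro z
      rw [← count_roots, hden, roots_prod_X_sub_C]
      exact Multiset.nodup_iff_count_le_one.mp (P ∪ P.image (starRingEnd ℂ)).nodup z
    · -- no real zeros/poles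
      intro x
      constructor
      · rw [hevalnum x]
        have : 0 < κ * ∏ q ∈ Q, Complex.normSq ((x : ℂ) - q) := mul_pos hκpos (hqx x)
        exact_mod_cast this.ne'
      · rw [hevalden x]
        exact_mod_cast (hpx x).ne'
    · -- equal degrees
      have hdT : ∀ T : Finset ℂ, (∏ z ∈ T, (X - C z) : ℂ[X]).natDegree = T.card := by
        intro T
        rw [natDegree_prod]
        · simp [natDegree_X_sub_C]
        · exact fun z _ => X_sub_C_ne_zero z
      have hmQ : (∏ z ∈ Q ∪ Q.image (starRingEnd ℂ), (X - C z) : ℂ[X]).Monic :=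
        monic_prod_of_monic _ _ fun z _ => monic_X_sub_C z
      have hmP : (∏ z ∈ P ∪ P.image (starRingEnd ℂ), (X - C z) : ℂ[X]).Monic :=
        monic_prod_of_monic _ _ fun z _ => monic_X_sub_C z
      rw [hnum, hden, degree_C_mul hκc, degree_eq_natDegree hmQ.ne_zero,
        degree_eq_natDegree hmP.ne_zero, hdT, hdT]
      have hdisjQ : Disjoint Q (Q.image (starRingEnd ℂ)) := by
        rw [Finset.disjoint_left]
        intro z hz hz'
        obtain ⟨w, hw, rfl⟩ := Finset.mem_image.mp hz'
        have h1 := hQ _ hz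
        have h2 := hQ _ hw
        simp only [Complex.conj_im] at h1
        linarith
      have hdisjP : Disjoint P (P.image (starRingEnd ℂ)) := by
        rw [Finset.disjoint_left]
        intro z hz hz'
        obtain ⟨w, hw, rfl⟩ := Finset.mem_image.mp hz'
        have h1 := hP _ hz
        have h2 := hP _ hw
        simp only [Complex.conj_im] at h1
        linarith
      rw [Finset.card_union_of_disjoint hdisjQ, Finset.card_union_of_disjoint hdisjP,
        Finset.card_image_of_injective _ (starRingEnd ℂ).injective,
        Finset.card_image_of_injective _ (starRingEnd ℂ).injective, hQcard, hPcard]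
    · -- positive real values on ℝ
      intro x
      refine ⟨κ * (∏ q ∈ Q, Complex.normSq ((x : ℂ) - q)) /
        ∏ p ∈ P, Complex.normSq ((x : ℂ) - p),
        div_pos (mul_pos hκpos (hqx x)) (hpx x), ?_⟩
      show (explicitF r Q P).num.eval (x : ℂ) / (explicitF r Q P).denom.eval (x : ℂ) = _
      rw [hevalnum x, hevalden x, ← Complex.ofReal_div]
    · -- zeros in upper half plane
      ext z
      simp only [Set.mem_setOf_eq, Finset.coe_sort_coe, Finset.mem_coe]
      constructor
      · rintro ⟨him, hz⟩
        rw [hnum, eval_mul, eval_C, mul_eq_zero] at hz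
        rcases hz with hz | hz
        · exact absurd hz hκc
        rw [aux_prod_roots_eval_eq_zero] at hz
        rw [Finset.mem_union, Finset.mem_image] at hz
        rcases hz with hz | ⟨q, hq, rfl⟩
        · exact hz
        · have := hQ _ hq
          simp only [Complex.conj_im] at him
          linarith
      · intro hz
        refine ⟨hQ _ hz, ?_⟩
        rw [hnum, eval_mul, mul_eq_zero]
        right
        rw [aux_prod_roots_eval_eq_zero]
        exact Finset.mem_union_left _ hz
    · -- poles in upper half plane
      ext z
      simp only [Set.mem_setOf_eq, Finset.coe_sort_coe, Finset.mem_coe]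
      constructor
      · rintro ⟨him, hz⟩
        rw [hden, aux_prod_roots_eval_eq_zero, Finset.mem_union, Finset.mem_image] at hz
        rcases hz with hz | ⟨p, hp, rfl⟩
        · exact hz
        · have := hP _ hp
          simp only [Complex.conj_im] at him
          linarith
      · intro hz
        refine ⟨hP _ hz, ?_⟩
        rw [hden, aux_prod_roots_eval_eq_zero]
        exact Finset.mem_union_left _ hz
end

section
/- Let ρ_a and ρ_b each be either a Reeb chord or trivial (length 0), and let j₁, j₂ ≥ 0 be integers. If gr'(U^{j₂}ρ_b)·r'(gr'(U^{j₁}ρ_a)) = (−2;0,0,0,0) in H, then the lengths |ρ_a| and |ρ_b| are both divisible by 4 and j₁ + |ρ_a|/4 = j₂ + |ρ_b|/4 = 1; in particular each of U^{j₁}ρ_a and U^{j₂}ρ_b is either U (a trivial chord with j = 1) or a chord of length exactly 4 (with j = 0). -/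
/-- The big grading group `G'` of the torus: tuples `(m; a, b, c, d)` with
`m ∈ ½ℤ` a half-integer and `a, b, c, d ∈ ℤ`. -/
def BigGr : Type := {x : ℚ × ℤ × ℤ × ℤ × ℤ // ∃ n : ℤ, x.1 = (n : ℚ) / 2}

namespace BigGr

/-- The Maslov component. -/
def m (x : BigGr) : ℚ := x.1.1

/-- The first spin-c component. -/
def a (x : BigGr) : ℤ := x.1.2.1

/-- The second spin-c component. -/
def b (x : BigGr) : ℤ := x.1.2.2.1

/-- The third spin-c component. -/
def c (x : BigGr) : ℤ := x.1.2.2.2.1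

/-- The fourth spin-c component. -/
def d (x : BigGr) : ℤ := x.1.2.2.2.2

/-- Construct an element `(m; a, b, c, d)` of the big grading group. -/
def mk (m₀ : ℚ) (a₀ b₀ c₀ d₀ : ℤ) (h : ∃ n : ℤ, m₀ = (n : ℚ) / 2) : BigGr :=
  ⟨(m₀, a₀, b₀, c₀, d₀), h⟩

/-- The multiplication
`(m;a,b,c,d)·(m';a',b',c',d') = (m+m'+½|a b;a' b'|+½|b c;b' c'|+½|c d;c' d'|+½|d a;d' a'|;
a+a', b+b', c+c', d+d')`. -/
def bmul (x y : BigGr) : BigGr :=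
  ⟨(x.m + y.m + ((x.a * y.b - y.a * x.b : ℤ) : ℚ) / 2 + ((x.b * y.c - y.b * x.c : ℤ) : ℚ) / 2
      + ((x.c * y.d - y.c * x.d : ℤ) : ℚ) / 2 + ((x.d * y.a - y.d * x.a : ℤ) : ℚ) / 2,
    x.a + y.a, x.b + y.b, x.c + y.c, x.d + y.d), by
      obtain ⟨n, hn⟩ := x.2
      obtain ⟨n', hn'⟩ := y.2
      have hm : x.m = (n : ℚ) / 2 := hn
      have hm' : y.m = (n' : ℚ) / 2 := hn'
      refine ⟨n + n' + (x.a * y.b - y.a * x.b) + (x.b * y.c - y.b * x.c)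
        + (x.c * y.d - y.c * x.d) + (x.d * y.a - y.d * x.a), ?_⟩
      dsimp only
      rw [hm, hm']
      push_cast
      ring⟩

/-- The identity element `(0;0,0,0,0)`. -/
def bone : BigGr := ⟨(0, 0, 0, 0, 0), ⟨0, by norm_num⟩⟩

/-- The inverse `(−m;−a,−b,−c,−d)` of `(m;a,b,c,d)`. -/
def binv (x : BigGr) : BigGr :=
  ⟨(-x.m, -x.a, -x.b, -x.c, -x.d), by
    obtain ⟨n, hn⟩ := x.2
    have hm : x.m = (n : ℚ) / 2 := hn
    refine ⟨-n, ?_⟩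
    dsimp only
    rw [hm]
    push_cast
    ring⟩

theorem bmul_assoc (x y z : BigGr) : bmul (bmul x y) z = bmul x (bmul y z) := by
  obtain ⟨⟨m₁, a₁, b₁, c₁, d₁⟩, h₁⟩ := x
  obtain ⟨⟨m₂, a₂, b₂, c₂, d₂⟩, h₂⟩ := y
  obtain ⟨⟨m₃, a₃, b₃, c₃, d₃⟩, h₃⟩ := z
  apply Subtype.ext
  simp only [bmul, m, a, b, c, d, Prod.mk.injEq]
  refine ⟨?_, ?_, ?_, ?_, ?_⟩ <;> push_cast <;> ring

theorem bone_mul (x : BigGr) : bmul bone x = x := by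
  obtain ⟨⟨m₁, a₁, b₁, c₁, d₁⟩, h₁⟩ := x
  apply Subtype.ext
  simp only [bmul, bone, m, a, b, c, d, Prod.mk.injEq]
  refine ⟨?_, ?_, ?_, ?_, ?_⟩ <;> push_cast <;> ring

theorem bmul_one (x : BigGr) : bmul x bone = x := by
  obtain ⟨⟨m₁, a₁, b₁, c₁, d₁⟩, h₁⟩ := x
  apply Subtype.ext
  simp only [bmul, bone, m, a, b, c, d, Prod.mk.injEq]
  refine ⟨?_, ?_, ?_, ?_, ?_⟩ <;> push_cast <;> ring

theorem binv_mul_cancel (x : BigGr) : bmul (binv x) x = bone := by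
  obtain ⟨⟨m₁, a₁, b₁, c₁, d₁⟩, h₁⟩ := x
  apply Subtype.ext
  simp only [bmul, bone, binv, m, a, b, c, d, Prod.mk.injEq]
  refine ⟨?_, ?_, ?_, ?_, ?_⟩ <;> push_cast <;> ring

instance instGroup : Group BigGr where
  mul := bmul
  one := bone
  inv := binv
  mul_assoc := bmul_assoc
  one_mul := bone_mul
  mul_one := bmul_one
  inv_mul_cancel := binv_mul_cancel

theorem mul_def (x y : BigGr) : x * y = bmul x y := rfl

theorem one_def : (1 : BigGr) = bone := rfl

theorem inv_def (x : BigGr) : x⁻¹ = binv x := rfl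

/-- The distinguished central element `λ = (1;0,0,0,0)`. -/
def lam : BigGr := mk 1 0 0 0 0 ⟨2, by norm_num⟩

/-- The weight grading element `λ_w = (1;1,1,1,1)`. -/
def lamw : BigGr := mk 1 1 1 1 1 ⟨2, by norm_num⟩

/-- The grading `gr'(U) = (−1;1,1,1,1)` of the variable `U`. -/
def grU : BigGr := mk (-1) 1 1 1 1 ⟨-2, by norm_num⟩

/-- `gr'(ρ₁) = (−1/2;1,0,0,0)`. -/
def grRho1 : BigGr := mk (-1/2) 1 0 0 0 ⟨-1, by norm_num⟩

/-- `gr'(ρ₂) = (−1/2;0,1,0,0)`. -/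
def grRho2 : BigGr := mk (-1/2) 0 1 0 0 ⟨-1, by norm_num⟩

/-- `gr'(ρ₃) = (−1/2;0,0,1,0)`. -/
def grRho3 : BigGr := mk (-1/2) 0 0 1 0 ⟨-1, by norm_num⟩

/-- `gr'(ρ₄) = (−1/2;0,0,0,1)`. -/
def grRho4 : BigGr := mk (-1/2) 0 0 0 1 ⟨-1, by norm_num⟩

/-- The anti-automorphism `r'(m;a,b,c,d) = (m;−c,−b,−a,−d)`. -/
def rprime (x : BigGr) : BigGr := ⟨(x.m, -x.c, -x.b, -x.a, -x.d), x.2⟩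

end BigGr

lemma grU_pow (j : ℕ) : BigGr.grU ^ j =
    ⟨(-(j : ℚ), j, j, j, j), ⟨-2 * j, by push_cast; ring⟩⟩ := by
  induction j with
  | zero => apply Subtype.ext; simp [BigGr.one_def, BigGr.bone]
  | succ n ih =>
    rw [pow_succ, BigGr.mul_def, ih]
    apply Subtype.ext
    simp only [BigGr.bmul, BigGr.grU, BigGr.mk, BigGr.m, BigGr.a, BigGr.b, BigGr.c, BigGr.d,
      Prod.mk.injEq]
    refine ⟨?_, ?_, ?_, ?_, ?_⟩ <;> push_cast <;> ring

/-- A Reeb chord in the genus-1 pointed matched circle, modeled as a pair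
`(s, ℓ)` with initial point `a_s` and length `ℓ`. -/
def Chord : Type := ZMod 4 × ℕ

/-- The `j`-th entry `#{0 ≤ i < ℓ : s + i ≡ j (mod 4)}` of the support of a chord. -/
def Chord.supp (ρ : Chord) (j : ZMod 4) : ℤ :=
  ((Finset.range ρ.2).filter fun i : ℕ => ρ.1 + (i : ZMod 4) = j).card

/-- `ι(ρ) = −ℓ/4` if `4 ∣ ℓ`, and `−1/2 − ⌊ℓ/4⌋` otherwise. -/
def iotaQ (ℓ : ℕ) : ℚ := if 4 ∣ ℓ then -(ℓ : ℚ) / 4 else -1/2 - ((ℓ / 4 : ℕ) : ℚ)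

/-- `gr'(ρ) = (ι(ρ); supp(ρ)) ∈ H`. -/
def grChord (ρ : Chord) : BigGr :=
  ⟨(iotaQ ρ.2, ρ.supp 1, ρ.supp 2, ρ.supp 3, ρ.supp 0), by
    dsimp only
    by_cases h : 4 ∣ ρ.2
    · obtain ⟨k, hk⟩ := id h
      refine ⟨-(2 * (k : ℤ)), ?_⟩
      simp only [iotaQ]
      rw [if_pos h, hk]
      push_cast
      ring
    · refine ⟨-1 - 2 * ((ρ.2 / 4 : ℕ) : ℤ), ?_⟩
      simp only [iotaQ]
      rw [if_neg h]
      simp only [Int.cast_sub, Int.cast_mul, Int.cast_natCast, Int.cast_one, Int.cast_neg,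
        Int.cast_ofNat]
      ring⟩

lemma supp_sum (ρ : Chord) : ρ.supp 0 + ρ.supp 1 + ρ.supp 2 + ρ.supp 3 = ρ.2 := by
  have key : (Finset.range ρ.2).card =
      ∑ j : ZMod 4, ((Finset.range ρ.2).filter fun i : ℕ => ρ.1 + (i : ZMod 4) = j).card := by
    exact Finset.card_eq_sum_card_fiberwise (fun x _ => Finset.mem_univ _)
  have huniv : ∀ f : ZMod 4 → ℕ, ∑ j : ZMod 4, f j = f 0 + f 1 + f 2 + f 3 := by
    intro f
    rw [show (Finset.univ : Finset (ZMod 4)) = {0, 1, 2, 3} by decide]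
    rw [Finset.sum_insert (by decide), Finset.sum_insert (by decide),
      Finset.sum_insert (by decide), Finset.sum_singleton]
    ring
  rw [huniv] at key
  unfold Chord.supp
  rw [Finset.card_range] at key
  omega

/-- if `gr'(U^{j₂}ρ_b)·r'(gr'(U^{j₁}ρ_a)) = (−2;0,0,0,0)`, then the lengths of
`ρ_a` and `ρ_b` are divisible by 4 and `j₁ + |ρ_a|/4 = j₂ + |ρ_b|/4 = 1`; in particular each
of `U^{j₁}ρ_a`, `U^{j₂}ρ_b` is either `U` (trivial chord, `j = 1`) or a chord of length
exactly `4` (with `j = 0`). -/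
theorem statement3 (ρa ρb : Chord) (j₁ j₂ : ℕ)
    (h : (BigGr.grU ^ j₂ * grChord ρb) * BigGr.rprime (BigGr.grU ^ j₁ * grChord ρa) =
      BigGr.mk (-2) 0 0 0 0 ⟨-4, by norm_num⟩) :
    4 ∣ ρa.2 ∧ 4 ∣ ρb.2 ∧ j₁ + ρa.2 / 4 = 1 ∧ j₂ + ρb.2 / 4 = 1 ∧
      ((j₁ = 1 ∧ ρa.2 = 0) ∨ (j₁ = 0 ∧ ρa.2 = 4)) ∧
      ((j₂ = 1 ∧ ρb.2 = 0) ∨ (j₂ = 0 ∧ ρb.2 = 4)) := by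

  rw [BigGr.mul_def, BigGr.mul_def, BigGr.mul_def, grU_pow, grU_pow] at h
  replace h := Subtype.ext_iff.mp h
  simp only [BigGr.bmul, BigGr.rprime, grChord, BigGr.mk, BigGr.m, BigGr.a, BigGr.b, BigGr.c,
    BigGr.d, Prod.mk.injEq] at h
  obtain ⟨em, e1, e2, e3, e4⟩ := h
  have f1 := congrArg (fun z : ℤ => (z : ℚ)) e1
  have f2 := congrArg (fun z : ℤ => (z : ℚ)) e2
  have f3 := congrArg (fun z : ℤ => (z : ℚ)) e3
  have f4 := congrArg (fun z : ℤ => (z : ℚ)) e4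
  push_cast at em f1 f2 f3 f4
  have hm : iotaQ ρa.2 + iotaQ ρb.2 - (j₁ : ℚ) - (j₂ : ℚ) = -2 := by
    linear_combination em
      - (((j₂ : ℚ) + (ρb.supp 0 : ℤ)) - ((j₂ : ℚ) + (ρb.supp 2 : ℤ)))/2 * f1
      - (((j₂ : ℚ) + (ρb.supp 1 : ℤ)) - ((j₂ : ℚ) + (ρb.supp 3 : ℤ)))/2 * f2
      - (((j₂ : ℚ) + (ρb.supp 2 : ℤ)) - ((j₂ : ℚ) + (ρb.supp 0 : ℤ)))/2 * f3
      - (((j₂ : ℚ) + (ρb.supp 3 : ℤ)) - ((j₂ : ℚ) + (ρb.supp 1 : ℤ)))/2 * f4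
  have sa := supp_sum ρa
  have sb := supp_sum ρb
  have hsum : 4 * j₂ + ρb.2 = 4 * j₁ + ρa.2 := by omega
  by_cases ha4 : 4 ∣ ρa.2
  · have hb4 : 4 ∣ ρb.2 := by omega
    rw [iotaQ, iotaQ, if_pos ha4, if_pos hb4] at hm
    have hk : (ρa.2 : ℚ) + (ρb.2 : ℚ) + 4 * j₁ + 4 * j₂ = 8 := by linarith
    have hk' : ρa.2 + ρb.2 + 4 * j₁ + 4 * j₂ = 8 := by exact_mod_cast hk
    omega
  · have hb4 : ¬ 4 ∣ ρb.2 := by omega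
    rw [iotaQ, iotaQ, if_neg ha4, if_neg hb4] at hm
    have hk : ((ρa.2 / 4 : ℕ) : ℚ) + ((ρb.2 / 4 : ℕ) : ℚ) + j₁ + j₂ = 1 := by linarith
    have hk' : ρa.2 / 4 + ρb.2 / 4 + j₁ + j₂ = 1 := by exact_mod_cast hk
    omega
end

section
/- The map r' : H → H defined by r'(m;a,b,c,d) = (m;−c,−b,−a,−d) is an anti-automorphism of H: it is a bijection (indeed an involution, r'∘r' = id) satisfying r'(g·h) = r'(h)·r'(g) for all g, h ∈ H. -/
/-- `r'(m;a,b,c,d) = (m;−c,−b,−a,−d)` is an anti-automorphism of the big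
grading group: a bijection (indeed an involution) with `r'(g·h) = r'(h)·r'(g)`. -/
theorem statement6 :
    Function.Bijective BigGr.rprime ∧
    (∀ x : BigGr, BigGr.rprime (BigGr.rprime x) = x) ∧
    (∀ g h : BigGr, BigGr.rprime (g * h) = BigGr.rprime h * BigGr.rprime g) := by
  have hinv : ∀ x : BigGr, BigGr.rprime (BigGr.rprime x) = x := by
    intro x
    apply Subtype.ext
    simp [BigGr.rprime, BigGr.m, BigGr.a, BigGr.b, BigGr.c, BigGr.d]
  refine ⟨Function.bijective_iff_has_inverse.2 ⟨BigGr.rprime, hinv, hinv⟩, hinv, ?_⟩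
  intro g h
  obtain ⟨⟨m₁, a₁, b₁, c₁, d₁⟩, h₁⟩ := g
  obtain ⟨⟨m₂, a₂, b₂, c₂, d₂⟩, h₂⟩ := h
  show BigGr.rprime (BigGr.bmul _ _) = BigGr.bmul _ _
  apply Subtype.ext
  simp only [BigGr.mul_def, BigGr.bmul, BigGr.rprime, BigGr.m, BigGr.a, BigGr.b, BigGr.c,
    BigGr.d, Prod.mk.injEq]
  refine ⟨?_, ?_, ?_, ?_, ?_⟩ <;> push_cast <;> ring
end

section
/- The subset T = {(m; a, a+b, b, 0) ∈ H : a, b ∈ ℤ, m + (a+b)/2 ∈ ℤ} is a subgroup of H, and for any g = (m;a,a+b,b,0) and h = (m';a',a'+b',b',0) in T one has the commutation relation g·h = λ^{2(ab'−a'b)}·h·g, where λ = (1;0,0,0,0). (This realizes the small grading group G(𝕋) of the torus, a central extension of ℤ by H₁(T²) with commutation relation gh = λ^{2[g]·[h]}hg, as a subgroup of the big grading group.) -/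
/-- The subset `T = {(m; a, a+b, b, 0) : a, b ∈ ℤ, m + (a+b)/2 ∈ ℤ}` of the big grading
group, which realizes the small grading group `G(𝕋)` of the torus. -/
def smallT : Set BigGr :=
  {x : BigGr | x.b = x.a + x.c ∧ x.d = 0 ∧ ∃ k : ℤ, x.m + ((x.a + x.c : ℤ) : ℚ) / 2 = (k : ℚ)}

/-!
The products `x * y` and `y * x` differ only in the Maslov component, by the sum `sympl x y` of
the four `2 × 2` determinants, an integer; hence `x * y = λ ^ sympl x y * (y * x)`. On `T` the
last two determinants vanish and the first two both equal `a b' − a' b`, so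
`sympl g h = 2 (a b' − a' b)`. For the same reason the Maslov correction `sympl g h / 2` of a
product in `T` is an integer, which keeps `m + (a + b) / 2` integral under multiplication.
-/

namespace BigGr

def sympl (x y : BigGr) : ℤ :=
  (x.a * y.b - y.a * x.b) + (x.b * y.c - y.b * x.c) + (x.c * y.d - y.c * x.d)
    + (x.d * y.a - y.d * x.a)

theorem ext {x y : BigGr} (hm : x.m = y.m) (ha : x.a = y.a) (hb : x.b = y.b)
    (hc : x.c = y.c) (hd : x.d = y.d) : x = y :=
  Subtype.ext (Prod.ext hm (Prod.ext ha (Prod.ext hb (Prod.ext hc hd))))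

@[simp] theorem mk_m (m₀ : ℚ) (a₀ b₀ c₀ d₀ : ℤ) (h) : (mk m₀ a₀ b₀ c₀ d₀ h).m = m₀ := rfl
@[simp] theorem mk_a (m₀ : ℚ) (a₀ b₀ c₀ d₀ : ℤ) (h) : (mk m₀ a₀ b₀ c₀ d₀ h).a = a₀ := rfl
@[simp] theorem mk_b (m₀ : ℚ) (a₀ b₀ c₀ d₀ : ℤ) (h) : (mk m₀ a₀ b₀ c₀ d₀ h).b = b₀ := rfl
@[simp] theorem mk_c (m₀ : ℚ) (a₀ b₀ c₀ d₀ : ℤ) (h) : (mk m₀ a₀ b₀ c₀ d₀ h).c = c₀ := rfl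
@[simp] theorem mk_d (m₀ : ℚ) (a₀ b₀ c₀ d₀ : ℤ) (h) : (mk m₀ a₀ b₀ c₀ d₀ h).d = d₀ := rfl

@[simp] theorem mul_m (x y : BigGr) : (x * y).m = x.m + y.m + (sympl x y : ℚ) / 2 := by
  change (bmul x y).m = _
  simp only [bmul, m, sympl]
  push_cast
  ring

@[simp] theorem mul_a (x y : BigGr) : (x * y).a = x.a + y.a := rfl
@[simp] theorem mul_b (x y : BigGr) : (x * y).b = x.b + y.b := rfl
@[simp] theorem mul_c (x y : BigGr) : (x * y).c = x.c + y.c := rfl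
@[simp] theorem mul_d (x y : BigGr) : (x * y).d = x.d + y.d := rfl

@[simp] theorem inv_m (x : BigGr) : x⁻¹.m = -x.m := rfl
@[simp] theorem inv_a (x : BigGr) : x⁻¹.a = -x.a := rfl
@[simp] theorem inv_b (x : BigGr) : x⁻¹.b = -x.b := rfl
@[simp] theorem inv_c (x : BigGr) : x⁻¹.c = -x.c := rfl
@[simp] theorem inv_d (x : BigGr) : x⁻¹.d = -x.d := rfl

@[simp] theorem one_m : (1 : BigGr).m = 0 := rfl
@[simp] theorem one_a : (1 : BigGr).a = 0 := rfl
@[simp] theorem one_b : (1 : BigGr).b = 0 := rfl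
@[simp] theorem one_c : (1 : BigGr).c = 0 := rfl

theorem lam_zpow (n : ℤ) : lam ^ n = mk n 0 0 0 0 ⟨2 * n, by push_cast; ring⟩ := by
  induction n using Int.induction_on with
  | zero => exact ext (by simp) rfl rfl rfl rfl
  | succ k ih =>
    rw [zpow_add_one, ih]
    exact ext (by simp [lam, sympl]) rfl rfl rfl rfl
  | pred k ih =>
    rw [zpow_sub_one, ih]
    exact ext (by simp [lam, sympl]; ring) rfl rfl rfl rfl

theorem mul_eq_lam_zpow_sympl_mul (x y : BigGr) : x * y = lam ^ sympl x y * (y * x) := by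
  rw [lam_zpow]
  exact ext (by simp [sympl]; ring) (by simp; ring) (by simp; ring) (by simp; ring)
    (by simp; ring)

theorem sympl_of_mem_smallT {g h : BigGr} (hg : g ∈ smallT) (hh : h ∈ smallT) :
    sympl g h = 2 * (g.a * h.c - h.a * g.c) := by
  obtain ⟨hbg, hdg, -⟩ := hg
  obtain ⟨hbh, hdh, -⟩ := hh
  rw [sympl, hbg, hbh, hdg, hdh]
  ring

def smallTSubgroup : Subgroup BigGr where
  carrier := smallT
  mul_mem' {x y} hx hy := by
    have hsympl := sympl_of_mem_smallT hx hy
    obtain ⟨hbx, hdx, kx, hkx⟩ := hx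
    obtain ⟨hby, hdy, ky, hky⟩ := hy
    refine ⟨by simp [hbx, hby]; ring, by simp [hdx, hdy], kx + ky + (x.a * y.c - y.a * x.c), ?_⟩
    rw [mul_m, hsympl, mul_a, mul_c]
    push_cast at hkx hky ⊢
    linarith
  one_mem' := ⟨by simp, rfl, 0, by simp⟩
  inv_mem' {x} hx := by
    obtain ⟨hbx, hdx, kx, hkx⟩ := hx
    refine ⟨by simp [hbx]; ring, by simp [hdx], -kx, ?_⟩
    rw [inv_m, inv_a, inv_c]
    push_cast at hkx ⊢
    linarith

end BigGr

/-- `T` is a subgroup of the big grading group, and for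
`g = (m;a,a+b,b,0)`, `h = (m';a',a'+b',b',0)` in `T` one has the commutation relation
`g·h = λ^{2(ab'−a'b)}·h·g`. -/
theorem statement7 :
    (∃ S : Subgroup BigGr, (S : Set BigGr) = smallT) ∧
    (∀ g h : BigGr, g ∈ smallT → h ∈ smallT →
      g * h = BigGr.lam ^ (2 * (g.a * h.c - h.a * g.c)) * (h * g)) :=
  ⟨⟨BigGr.smallTSubgroup, rfl⟩, fun g h hg hh => by
    rw [← BigGr.sympl_of_mem_smallT hg hh]
    exact BigGr.mul_eq_lam_zpow_sympl_mul g h⟩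
end

section
/- (Lambe–Stasheff side conditions.) Let (C,d_C) and (D,d_D) be chain complexes over 𝔽₂, let f : C → D and g : D → C be chain maps, and let T : C → C be a linear map such that f∘g = id_D and id_C + g∘f = d_C∘T + T∘d_C. Set T' = (id_C + g∘f)∘T∘(id_C + g∘f) and T'' = T'∘d_C∘T'. Then id_C + g∘f = d_C∘T'' + T''∘d_C, and moreover f∘T'' = 0, T''∘g = 0, and T''∘T'' = 0; that is, (f, g, T'') is a strong deformation retraction from C to D. -/
/-!
Over any ring, `p = 1 - g f` is an idempotent commuting with `d` and annihilated by `f` on the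
left and by `g` on the right. Sandwiching the homotopy, `s = p T p`, keeps `p = d s + s d` and
makes `s` absorb `p` on both sides; then `p = p² = (d s + s d)²` and `d s s d = 0` show that
`s d s` is again a null-homotopy of `p`, and it squares to `s (d s s d) s = 0`. In
characteristic two `1 + g f = 1 - g f`.
-/

section Ring

variable {R : Type*} [Ring R]

def IsNullHomotopy (d p t : R) : Prop :=
  p = d * t + t * d

variable {d p t s : R}

theorem IsNullHomotopy.sandwich (h : IsNullHomotopy d p t) (hdp : Commute d p)
    (hp : IsIdempotentElem p) : IsNullHomotopy d p (p * t * p) := by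
  refine Eq.symm ?_
  calc d * (p * t * p) + p * t * p * d = d * p * t * p + p * t * (p * d) := by noncomm_ring
    _ = p * d * t * p + p * t * (d * p) := by rw [hdp.eq]
    _ = p * (d * t + t * d) * p := by noncomm_ring
    _ = p := by rw [← h, hp.eq, hp.eq]

theorem IsNullHomotopy.mul_mul_mul_eq_zero (h : IsNullHomotopy d p s) (hd : d * d = 0)
    (hps : p * s = s) (hsp : s * p = s) : d * s * (s * d) = 0 := by
  have hds : d * s = p - s * d := eq_sub_of_add_eq h.symm
  calc d * s * (s * d) = (p - s * d) * s * d := by rw [← hds]; simp only [mul_assoc]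
    _ = p * s * d - s * (d * s) * d := by noncomm_ring
    _ = s * d - s * (p - s * d) * d := by rw [hps, hds]
    _ = s * d - (s * p * d - s * s * (d * d)) := by noncomm_ring
    _ = 0 := by rw [hsp, hd]; noncomm_ring

theorem IsNullHomotopy.mul_mul (h : IsNullHomotopy d p s) (hd : d * d = 0)
    (hp : IsIdempotentElem p) (hps : p * s = s) (hsp : s * p = s) :
    IsNullHomotopy d p (s * d * s) := by
  have h' : p = d * s + s * d := h
  calc p = p * p := hp.eq.symm
    _ = (d * s + s * d) * (d * s + s * d) := by rw [← h']
    _ = d * (s * d * s) + s * d * s * d + d * s * (s * d) + s * (d * d) * s := by noncomm_ring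
    _ = d * (s * d * s) + s * d * s * d := by
      rw [h.mul_mul_mul_eq_zero hd hps hsp, hd]; noncomm_ring

theorem IsNullHomotopy.mul_mul_mul_self_eq_zero (h : IsNullHomotopy d p s) (hd : d * d = 0)
    (hps : p * s = s) (hsp : s * p = s) : s * d * s * (s * d * s) = 0 := by
  calc s * d * s * (s * d * s) = s * (d * s * (s * d)) * s := by noncomm_ring
    _ = 0 := by rw [h.mul_mul_mul_eq_zero hd hps hsp, mul_zero, zero_mul]

end Ring

namespace LinearMap

variable {R M N : Type*} [Ring R] [AddCommGroup M] [Module R M] [AddCommGroup N] [Module R N]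
  {f : M →ₗ[R] N} {g : N →ₗ[R] M}

theorem isIdempotentElem_id_sub_comp (hfg : f ∘ₗ g = id) :
    IsIdempotentElem (id - g ∘ₗ f : Module.End R M) := by
  have hgf : IsIdempotentElem (g ∘ₗ f : Module.End R M) := by
    change g ∘ₗ f ∘ₗ g ∘ₗ f = g ∘ₗ f
    rw [← comp_assoc f, hfg, id_comp]
  exact hgf.one_sub

theorem comp_id_sub_comp_eq_zero (hfg : f ∘ₗ g = id) : f ∘ₗ (id - g ∘ₗ f) = 0 := by
  rw [comp_sub, comp_id, ← comp_assoc, hfg, id_comp, sub_self]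

theorem id_sub_comp_comp_eq_zero (hfg : f ∘ₗ g = id) : (id - g ∘ₗ f) ∘ₗ g = 0 := by
  rw [sub_comp, id_comp, comp_assoc, hfg, comp_id, sub_self]

theorem commute_id_sub_comp {dM : Module.End R M} {dN : Module.End R N}
    (hf : dN ∘ₗ f = f ∘ₗ dM) (hg : dM ∘ₗ g = g ∘ₗ dN) :
    Commute dM (id - g ∘ₗ f) := by
  change dM ∘ₗ (id - g ∘ₗ f) = (id - g ∘ₗ f) ∘ₗ dM
  rw [comp_sub, sub_comp, comp_id, id_comp, ← comp_assoc, hg, comp_assoc, hf, comp_assoc]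

end LinearMap

open LinearMap in
theorem statement10_general {C D : Type*} [AddCommGroup C] [Module (ZMod 2) C]
    [AddCommGroup D] [Module (ZMod 2) D]
    (dC : C →ₗ[ZMod 2] C) (dD : D →ₗ[ZMod 2] D)
    (hdC : dC ∘ₗ dC = 0)
    (f : C →ₗ[ZMod 2] D) (g : D →ₗ[ZMod 2] C)
    (hf : dD ∘ₗ f = f ∘ₗ dC) (hg : dC ∘ₗ g = g ∘ₗ dD)
    (T : C →ₗ[ZMod 2] C)
    (hfg : f ∘ₗ g = LinearMap.id)
    (hT : LinearMap.id + g ∘ₗ f = dC ∘ₗ T + T ∘ₗ dC) :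
    ∀ T' T'' : C →ₗ[ZMod 2] C,
      T' = (LinearMap.id + g ∘ₗ f) ∘ₗ T ∘ₗ (LinearMap.id + g ∘ₗ f) →
      T'' = T' ∘ₗ dC ∘ₗ T' →
      (LinearMap.id + g ∘ₗ f = dC ∘ₗ T'' + T'' ∘ₗ dC) ∧
      f ∘ₗ T'' = 0 ∧ T'' ∘ₗ g = 0 ∧ T'' ∘ₗ T'' = 0 := by
  rintro _ _ rfl rfl
  have hchar : LinearMap.id + g ∘ₗ f = LinearMap.id - g ∘ₗ f :=
    (ZModModule.sub_eq_add _ _).symm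
  rw [hchar] at hT ⊢
  set p : Module.End (ZMod 2) C := LinearMap.id - g ∘ₗ f
  have hp : IsIdempotentElem p := isIdempotentElem_id_sub_comp hfg
  have hs : IsNullHomotopy dC p (p * T * p) := IsNullHomotopy.sandwich hT
    (commute_id_sub_comp hf hg) hp
  have hps : p * (p * T * p) = p * T * p := by rw [← mul_assoc, ← mul_assoc, hp.eq]
  have hsp : p * T * p * p = p * T * p := by rw [mul_assoc, hp.eq]
  have hfp : f ∘ₗ p = 0 := comp_id_sub_comp_eq_zero hfg
  have hpg : p ∘ₗ g = 0 := id_sub_comp_comp_eq_zero hfg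
  refine ⟨hs.mul_mul hdC hp hps hsp, ?_, ?_, hs.mul_mul_mul_self_eq_zero hdC hps hsp⟩
  · change f ∘ₗ p ∘ₗ (T ∘ₗ p ∘ₗ dC ∘ₗ p ∘ₗ T ∘ₗ p) = 0
    rw [← comp_assoc, hfp, zero_comp]
  · simp only [comp_assoc, hpg, comp_zero]

/-- Lambe–Stasheff side conditions: given chain complexes `(C, d_C)` and
`(D, d_D)` over `𝔽₂`, chain maps `f : C → D`, `g : D → C` with `f ∘ g = id` and a homotopy
`T` with `id + g∘f = d_C∘T + T∘d_C`, the modified homotopy `T'' = T'∘d_C∘T'`, where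
`T' = (id + g∘f)∘T∘(id + g∘f)`, still satisfies `id + g∘f = d_C∘T'' + T''∘d_C` and moreover
`f∘T'' = 0`, `T''∘g = 0`, `T''∘T'' = 0`; that is, `(f, g, T'')` is a strong deformation
retraction from `C` to `D`. -/
theorem statement10 {C D : Type*} [AddCommGroup C] [Module (ZMod 2) C]
    [AddCommGroup D] [Module (ZMod 2) D]
    (dC : C →ₗ[ZMod 2] C) (dD : D →ₗ[ZMod 2] D)
    (hdC : dC ∘ₗ dC = 0) (hdD : dD ∘ₗ dD = 0)
    (f : C →ₗ[ZMod 2] D) (g : D →ₗ[ZMod 2] C)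
    (hf : dD ∘ₗ f = f ∘ₗ dC) (hg : dC ∘ₗ g = g ∘ₗ dD)
    (T : C →ₗ[ZMod 2] C)
    (hfg : f ∘ₗ g = LinearMap.id)
    (hT : LinearMap.id + g ∘ₗ f = dC ∘ₗ T + T ∘ₗ dC) :
    ∀ T' T'' : C →ₗ[ZMod 2] C,
      T' = (LinearMap.id + g ∘ₗ f) ∘ₗ T ∘ₗ (LinearMap.id + g ∘ₗ f) →
      T'' = T' ∘ₗ dC ∘ₗ T' →
      (LinearMap.id + g ∘ₗ f = dC ∘ₗ T'' + T'' ∘ₗ dC) ∧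
      f ∘ₗ T'' = 0 ∧ T'' ∘ₗ g = 0 ∧ T'' ∘ₗ T'' = 0 :=
  statement10_general dC dD hdC f g hf hg T hfg hT
end

section
/- Let n ≥ 1 and let P be a subgroup of ℤⁿ. Suppose there exists a linear functional A : ℝⁿ → ℝ with A(eᵢ) > 0 for every standard basis vector eᵢ and with A(p) = 0 for every p ∈ P. Then for every v₀ ∈ ℤⁿ, the set {v ∈ ℤⁿ : v − v₀ ∈ P and vᵢ ≥ 0 for all i} is finite. -/
/-!
The functional `A` is constant, equal to `A v₀`, on the coset `v₀ + P`. On the nonnegative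
orthant `A` is a positive combination of the coordinates, so there `A v ≤ A v₀` bounds each
coordinate `vᵢ` by `A v₀ / A eᵢ`; the nonnegative points of the coset thus lie in a box.
-/

open Finset

section NonnegOrthant

variable {ι : Type*} [Fintype ι] [DecidableEq ι]

theorem LinearMap.apply_eq_sum_mul_single (A : (ι → ℝ) →ₗ[ℝ] ℝ) (x : ι → ℝ) :
    A x = ∑ i, x i * A (Pi.single i 1) := by
  rw [LinearMap.pi_apply_eq_sum_univ]
  refine sum_congr rfl fun i _ => ?_
  rw [smul_eq_mul]
  congr 2
  ext j
  simp [Pi.single_apply, eq_comm]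

theorem LinearMap.coord_mul_le_apply {A : (ι → ℝ) →ₗ[ℝ] ℝ} (hA : ∀ i, 0 ≤ A (Pi.single i 1))
    {x : ι → ℝ} (hx : 0 ≤ x) (i : ι) : x i * A (Pi.single i 1) ≤ A x := by
  rw [A.apply_eq_sum_mul_single x]
  exact single_le_sum (fun j _ => mul_nonneg (hx j) (hA j)) (mem_univ i)

theorem finite_setOf_nonneg_apply_intCast_le {A : (ι → ℝ) →ₗ[ℝ] ℝ}
    (hA : ∀ i, 0 < A (Pi.single i 1)) (c : ℝ) :
    {v : ι → ℤ | 0 ≤ v ∧ A (fun i => (v i : ℝ)) ≤ c}.Finite := by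
  refine (Set.finite_Icc (0 : ι → ℤ) fun i => ⌈c / A (Pi.single i 1)⌉).subset ?_
  rintro v ⟨hv, hAv⟩
  refine ⟨hv, fun i => ?_⟩
  have hvi : (v i : ℝ) ≤ c / A (Pi.single i 1) :=
    (le_div_iff₀ (hA i)).2 <| (A.coord_mul_le_apply (fun j => (hA j).le)
      (fun j => Int.cast_nonneg_iff.2 (hv j)) i).trans hAv
  exact_mod_cast hvi.trans (Int.le_ceil _)

end NonnegOrthant

theorem statement15_general (n : ℕ) (P : AddSubgroup (Fin n → ℤ))
    (A : (Fin n → ℝ) →ₗ[ℝ] ℝ)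
    (hpos : ∀ i : Fin n, 0 < A (Pi.single i 1))
    (hzero : ∀ p ∈ P, A (fun i => (p i : ℝ)) = 0)
    (v₀ : Fin n → ℤ) :
    {v : Fin n → ℤ | v - v₀ ∈ P ∧ ∀ i, 0 ≤ v i}.Finite := by
  refine (finite_setOf_nonneg_apply_intCast_le hpos (A fun i => (v₀ i : ℝ))).subset ?_
  rintro v ⟨hvP, hv⟩
  refine ⟨hv, le_of_eq ?_⟩
  rw [← sub_eq_zero, ← map_sub]
  convert hzero _ hvP using 2
  ext i
  simp

/-- let `P ≤ ℤⁿ` be a subgroup admitting a linear functional `A : ℝⁿ → ℝ`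
which is positive on every standard basis vector and vanishes on (the real points of) `P`.
Then each coset `v₀ + P` contains only finitely many coordinatewise-nonnegative vectors. -/
theorem statement15 (n : ℕ) (hn : 1 ≤ n) (P : AddSubgroup (Fin n → ℤ))
    (A : (Fin n → ℝ) →ₗ[ℝ] ℝ)
    (hpos : ∀ i : Fin n, 0 < A (Pi.single i 1))
    (hzero : ∀ p ∈ P, A (fun i => (p i : ℝ)) = 0)
    (v₀ : Fin n → ℤ) :
    {v : Fin n → ℤ | v - v₀ ∈ P ∧ ∀ i, 0 ≤ v i}.Finite :=
  statement15_general n P A hpos hzero v₀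
end
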